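/- Let Y be a real-valued random variable with Gaussian distribution of mean m and standard deviation s > 0, and let T be a real number (the current best observed value). Then the expected improvement E[max(0, T − Y)] equals (T − m)·Φ((T − m)/s) + s·φ((T − m)/s), where φ and Φ denote the probability density function and the cumulative distribution function of the standard normal distribution. -/

import Mathlib

/-!
With `c = (T - m) / s` and `Z = (Y - m) / s` standard normal, `T - Y = s * (c - Z)`, so the
expected improvement is `s * ∫_{-∞}^c (c - z) φ(z) dz`. Since `φ' = -z φ`, the term
`∫_{-∞}^c z φ(z) dz` equals `-φ(c)`, which leaves `s * (c Φ(c) + φ(c))`.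
-/

open MeasureTheory ProbabilityTheory Real

/-- The standard normal probability density function. -/
noncomputable def stdNormalPDF (z : ℝ) : ℝ :=
  (1 / Real.sqrt (2 * Real.pi)) * Real.exp (-z ^ 2 / 2)

/-- The standard normal cumulative distribution function. -/
noncomputable def stdNormalCDF (z : ℝ) : ℝ :=
  ∫ t in Set.Iic z, stdNormalPDF t

open Filter Set

lemma stdNormalPDF_eq_gaussianPDFReal : stdNormalPDF = gaussianPDFReal 0 1 := by
  ext z
  simp [stdNormalPDF, gaussianPDFReal]

lemma integrable_mul_stdNormalPDF : Integrable fun z ↦ z * stdNormalPDF z := by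
  simpa [stdNormalPDF, mul_left_comm, neg_div, div_eq_inv_mul] using
    (integrable_mul_exp_neg_mul_sq (b := 1 / 2) (by norm_num)).const_mul (1 / √(2 * π))

lemma hasDerivAt_stdNormalPDF (x : ℝ) : HasDerivAt stdNormalPDF (-x * stdNormalPDF x) x := by
  have h : HasDerivAt (fun z : ℝ ↦ -z ^ 2 / 2) (-x) x :=
    ((hasDerivAt_pow 2 x).neg.div_const 2).congr_deriv (by push_cast; ring)
  exact (h.exp.const_mul (1 / √(2 * π))).congr_deriv (by rw [stdNormalPDF]; ring)

lemma tendsto_stdNormalPDF_atBot : Tendsto stdNormalPDF atBot (nhds 0) := by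
  have h : Tendsto (fun z : ℝ ↦ -z ^ 2 / 2) atBot atBot :=
    (tendsto_neg_atTop_atBot.comp
      ((tendsto_pow_atTop two_ne_zero).comp tendsto_neg_atBot_atTop)).atBot_div_const two_pos
      |>.congr fun z ↦ by simp
  have := (tendsto_exp_atBot.comp h).const_mul (1 / √(2 * π))
  rwa [mul_zero] at this

lemma integral_Iic_mul_stdNormalPDF (c : ℝ) :
    ∫ z in Iic c, z * stdNormalPDF z = -stdNormalPDF c := by
  simpa using integral_Iic_of_hasDerivAt_of_tendsto'
    (fun x _ ↦ (hasDerivAt_stdNormalPDF x).neg)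
    (by simpa using integrable_mul_stdNormalPDF.integrableOn)
    tendsto_stdNormalPDF_atBot.neg

lemma integral_gaussianReal_zero_one_eq_integral_mul (f : ℝ → ℝ) :
    ∫ z, f z ∂gaussianReal 0 1 = ∫ z, stdNormalPDF z * f z := by
  simp [integral_gaussianReal_eq_integral_smul, stdNormalPDF_eq_gaussianPDFReal]

lemma max_zero_sub_eq_indicator (c z : ℝ) : max 0 (c - z) = (Iic c).indicator (c - ·) z := by
  by_cases h : z ≤ c
  · simp [h]
  · simp [h, (not_le.1 h).le]

lemma integral_max_zero_sub_gaussianReal_zero_one (c : ℝ) :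
    ∫ z, max 0 (c - z) ∂gaussianReal 0 1 = c * stdNormalCDF c + stdNormalPDF c := by
  have hφ : IntegrableOn stdNormalPDF (Iic c) :=
    (stdNormalPDF_eq_gaussianPDFReal ▸ integrable_gaussianPDFReal 0 1).integrableOn
  calc ∫ z, max 0 (c - z) ∂gaussianReal 0 1
      = ∫ z in Iic c, (c * stdNormalPDF z - z * stdNormalPDF z) := by
        simp_rw [integral_gaussianReal_zero_one_eq_integral_mul, max_zero_sub_eq_indicator,
          ← indicator_mul_right, integral_indicator measurableSet_Iic, mul_sub, mul_comm]
    _ = c * stdNormalCDF c + stdNormalPDF c := by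
        rw [integral_sub (hφ.const_mul c) integrable_mul_stdNormalPDF.integrableOn,
          integral_const_mul, integral_Iic_mul_stdNormalPDF, stdNormalCDF, sub_neg_eq_add]

lemma hasLaw_standardize_gaussianReal {Ω : Type*} [MeasurableSpace Ω] {P : Measure Ω}
    {Y : Ω → ℝ} {m s : ℝ} (hY : HasLaw Y (gaussianReal m (s ^ 2).toNNReal) P) (hs : s ≠ 0) :
    HasLaw (fun ω ↦ (Y ω - m) / s) (gaussianReal 0 1) P := by
  convert gaussianReal_div_const (gaussianReal_sub_const hY m) s using 2
  · simp
  · ext; simp [sq_nonneg, hs]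

/-- **Closed form of the Expected Improvement.**
If `Y` is a real random variable whose law is Gaussian with mean `m` and
standard deviation `s > 0`, and `T` is the current best observed value, then
`E[max (0, T - Y)] = (T - m) * Φ((T - m)/s) + s * φ((T - m)/s)`. -/
theorem expected_improvement_closed_form
    {Ω : Type*} [MeasurableSpace Ω] (P : Measure Ω) [IsProbabilityMeasure P]
    (Y : Ω → ℝ) (hY : Measurable Y) (m s T : ℝ) (hs : 0 < s)
    (hlaw : Measure.map Y P = gaussianReal m (Real.toNNReal (s ^ 2))) :
    ∫ ω, max 0 (T - Y ω) ∂P =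
      (T - m) * stdNormalCDF ((T - m) / s) + s * stdNormalPDF ((T - m) / s) := by
  have hZ := hasLaw_standardize_gaussianReal ⟨hY.aemeasurable, hlaw⟩ hs.ne'
  have hscale (ω : Ω) : max 0 (T - Y ω) = s * max 0 ((T - m) / s - (Y ω - m) / s) := by
    rw [mul_max_of_nonneg _ _ hs.le, mul_zero, mul_sub, mul_div_cancel₀ _ hs.ne',
      mul_div_cancel₀ _ hs.ne', sub_sub_sub_cancel_right]
  have hEI : ∫ ω, max 0 ((T - m) / s - (Y ω - m) / s) ∂P
      = ∫ z, max 0 ((T - m) / s - z) ∂gaussianReal 0 1 :=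
    hZ.integral_comp (f := fun z ↦ max 0 ((T - m) / s - z)) (by fun_prop)
  rw [integral_congr_ae (ae_of_all _ hscale), integral_const_mul, hEI,
    integral_max_zero_sub_gaussianReal_zero_one, mul_add, ← mul_assoc, mul_div_cancel₀ _ hs.ne']
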